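/- arXiv:math-ph/0312034 — 2 statements merged into one kernel-verified Lean document; each statement's English description precedes it below -/
import Mathlib

section
/- Let Φ₀₁(x,y) = c(x)·(−sin(φ/2)y₁ + cos(φ/2)y₂)·G(x,y) and Φ₁₀(x,y) = d(x)·(cos(φ/2)y₁ + sin(φ/2)y₂)·G(x,y) with c(x) = (1−|x|)^{1/4}, d(x) = (1+|x|)^{1/4} and G smooth. Then the rotated combinations Φ_A = sin(φ/2)Φ₀₁ − cos(φ/2)Φ₁₀ and Φ_B = cos(φ/2)Φ₀₁ + sin(φ/2)Φ₁₀ satisfy Φ_A(x,y) = G(x,y)(−y₁ − x₁y₁/4 − x₂y₂/4 + O(|x|²)) and Φ_B(x,y) = G(x,y)(y₂ + x₂y₁/4 − x₁y₂/4 + O(|x|²)) near x = 0, hence extend smoothly (to first order) through the origin. -/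
open Filter Topology Asymptotics

/-!
Write `s, c` for the sine and cosine of `φ/2`. The half-angle formulas give `r (c² − s²) = x₁` and
`2 r s c = x₂`, so once `(1 ∓ r)^{1/4}` are replaced by their linearisations `1 ∓ r/4`, the
combinations `Φ_A`, `Φ_B` become exactly `G` times the stated polynomials: the half-angle factors
recombine into `x₁, x₂`. What is left is `G` times bounded trigonometric weights times the
remainders `(1 ± r)^{1/4} − (1 ± r/4) = O(r²)`; the latter follow from `u⁴ = 1 + t` for
`u = (1 + t)^{1/4}`, which gives `u − (1 + t/4) = −(u − 1)²(u² + 2u + 3)/4`.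
-/

lemma abs_one_add_rpow_quarter_sub_le {t : ℝ} (ht : |t| ≤ 1) :
    |(1 + t) ^ ((1 : ℝ) / 4) - (1 + t / 4)| ≤ 3 * t ^ 2 := by
  obtain ⟨ht₁, ht₂⟩ := abs_le.1 ht
  set u := (1 + t) ^ ((1 : ℝ) / 4) with hu
  have hu₀ : 0 ≤ u := Real.rpow_nonneg (by linarith) _
  have hu₄ : u ^ 4 = 1 + t := by
    rw [hu, ← Real.rpow_mul_natCast (by linarith)]; norm_num
  have hu₂ : u ≤ 2 := by nlinarith [sq_nonneg (u - 2), sq_nonneg (u + 2), sq_nonneg u]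
  have hu₁ : (u - 1) ^ 2 ≤ t ^ 2 := by
    have : t = (u - 1) * (u ^ 3 + u ^ 2 + u + 1) := by linear_combination -hu₄
    rw [this, mul_pow]
    refine le_mul_of_one_le_right (sq_nonneg _) (one_le_pow₀ ?_)
    linarith [pow_nonneg hu₀ 3, sq_nonneg u]
  have hfactor : u - (1 + t / 4) = -((u - 1) ^ 2 * (u ^ 2 + 2 * u + 3)) / 4 := by
    linear_combination hu₄ / 4
  rw [hfactor, abs_div, abs_neg, abs_of_nonneg (by positivity), abs_of_pos four_pos]
  nlinarith [sq_nonneg (u - 1)]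

lemma isBigO_one_add_rpow_quarter_sub :
    (fun t : ℝ => (1 + t) ^ ((1 : ℝ) / 4) - (1 + t / 4)) =O[𝓝 0] fun t => t ^ 2 := by
  refine IsBigO.of_bound 3 ?_
  filter_upwards [Metric.closedBall_mem_nhds (0 : ℝ) one_pos] with t ht
  rw [Metric.mem_closedBall, Real.dist_eq, sub_zero] at ht
  simpa using abs_one_add_rpow_quarter_sub_le ht

namespace Complex

lemma norm_mul_cos_sq_sub_sin_sq_half_arg (z : ℂ) :
    ‖z‖ * (Real.cos (arg z / 2) ^ 2 - Real.sin (arg z / 2) ^ 2) = z.re := by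
  rw [← Real.cos_two_mul', mul_div_cancel₀ _ two_ne_zero, norm_mul_cos_arg]

lemma norm_mul_two_mul_sin_mul_cos_half_arg (z : ℂ) :
    ‖z‖ * (2 * Real.sin (arg z / 2) * Real.cos (arg z / 2)) = z.im := by
  rw [← Real.sin_two_mul, mul_div_cancel₀ _ two_ne_zero, norm_mul_sin_arg]

end Complex

lemma abs_mul_add_mul_le {s c y₁ y₂ : ℝ} (hs : |s| ≤ 1) (hc : |c| ≤ 1) :
    |s * y₁ + c * y₂| ≤ |y₁| + |y₂| := by
  calc |s * y₁ + c * y₂| ≤ |s| * |y₁| + |c| * |y₂| := by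
        simpa only [abs_mul] using abs_add_le (s * y₁) (c * y₂)
    _ ≤ |y₁| + |y₂| := by nlinarith [abs_nonneg y₁, abs_nonneg y₂]

lemma abs_mul_rotate_le {p : ℝ} (hp : |p| ≤ 1) (θ y₁ y₂ : ℝ) :
    |p * (-Real.sin θ * y₁ + Real.cos θ * y₂)| ≤ |y₁| + |y₂| ∧
      |p * (Real.cos θ * y₁ + Real.sin θ * y₂)| ≤ |y₁| + |y₂| := by
  have hsin := Real.abs_sin_le_one θ
  have hcos := Real.abs_cos_le_one θ
  constructor <;> rw [abs_mul] <;> refine (mul_le_of_le_one_left (abs_nonneg _) hp).trans ?_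
  · exact abs_mul_add_mul_le (by rwa [abs_neg]) hcos
  · exact abs_mul_add_mul_le hcos hsin

lemma isBigO_mul_add_mul_of_abs_le {α : Type*} {l : Filter α} {g u v A B k : α → ℝ} {C : ℝ}
    (hg : g =O[l] fun _ => (1 : ℝ)) (hu : ∀ x, |u x| ≤ C) (hv : ∀ x, |v x| ≤ C)
    (hA : A =O[l] k) (hB : B =O[l] k) :
    (fun x => g x * (u x * A x + v x * B x)) =O[l] k := by
  have hu₁ : u =O[l] fun _ => (1 : ℝ) := isBigO_of_le' l (c := C) fun x => by simpa using hu x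
  have hv₁ : v =O[l] fun _ => (1 : ℝ) := isBigO_of_le' l (c := C) fun x => by simpa using hv x
  simpa using hg.mul ((hu₁.mul hA).add (hv₁.mul hB))

section HalfAngle

variable {s c ρ x₁ x₂ : ℝ} (a b g y₁ y₂ : ℝ)

lemma sin_mul_sub_cos_mul_sub_eq (hsc : s ^ 2 + c ^ 2 = 1) (h₁ : ρ * (c ^ 2 - s ^ 2) = x₁)
    (h₂ : ρ * (2 * s * c) = x₂) :
    s * (a * (-s * y₁ + c * y₂) * g) - c * (b * (c * y₁ + s * y₂) * g)
        - g * (-y₁ - x₁ * y₁ / 4 - x₂ * y₂ / 4) =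
      g * (s * (-s * y₁ + c * y₂) * (a - (1 - ρ / 4))
        + -c * (c * y₁ + s * y₂) * (b - (1 + ρ / 4))) := by
  linear_combination (-(g * y₁)) * hsc + (-(g * y₁) / 4) * h₁ + (-(g * y₂) / 4) * h₂

lemma cos_mul_add_sin_mul_sub_eq (hsc : s ^ 2 + c ^ 2 = 1) (h₁ : ρ * (c ^ 2 - s ^ 2) = x₁)
    (h₂ : ρ * (2 * s * c) = x₂) :
    c * (a * (-s * y₁ + c * y₂) * g) + s * (b * (c * y₁ + s * y₂) * g)
        - g * (y₂ + x₂ * y₁ / 4 - x₁ * y₂ / 4) =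
      g * (c * (-s * y₁ + c * y₂) * (a - (1 - ρ / 4))
        + s * (c * y₁ + s * y₂) * (b - (1 + ρ / 4))) := by
  linear_combination (g * y₂) * hsc + (-(g * y₂) / 4) * h₁ + ((g * y₁) / 4) * h₂

end HalfAngle

/-- The rotated combinations `Φ_A = sin(φ/2)Φ₀₁ − cos(φ/2)Φ₁₀` and
`Φ_B = cos(φ/2)Φ₀₁ + sin(φ/2)Φ₁₀` of the half-angle eigenfunctions
`Φ₀₁ = (1−|x|)^{1/4}(−sin(φ/2)y₁+cos(φ/2)y₂)G`, `Φ₁₀ = (1+|x|)^{1/4}(cos(φ/2)y₁+sin(φ/2)y₂)G`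
satisfy `Φ_A = G·(−y₁ − x₁y₁/4 − x₂y₂/4 + O(|x|²))` and
`Φ_B = G·(y₂ + x₂y₁/4 − x₁y₂/4 + O(|x|²))` near `x = 0`. -/
theorem rotated_basis_smooth_expansion
    (G : ℝ × ℝ → ℝ × ℝ → ℝ)
    (hG : ∀ y, ContinuousAt (fun x => G x y) 0) :
    let φ : ℝ × ℝ → ℝ := fun x => Complex.arg ((x.1 : ℂ) + x.2 * Complex.I)
    let r : ℝ × ℝ → ℝ := fun x => Real.sqrt (x.1 ^ 2 + x.2 ^ 2)
    let Φ01 : ℝ × ℝ → ℝ × ℝ → ℝ := fun x y =>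
      (1 - r x) ^ ((1 : ℝ) / 4) *
        (-Real.sin (φ x / 2) * y.1 + Real.cos (φ x / 2) * y.2) * G x y
    let Φ10 : ℝ × ℝ → ℝ × ℝ → ℝ := fun x y =>
      (1 + r x) ^ ((1 : ℝ) / 4) *
        (Real.cos (φ x / 2) * y.1 + Real.sin (φ x / 2) * y.2) * G x y
    let ΦA : ℝ × ℝ → ℝ × ℝ → ℝ := fun x y =>
      Real.sin (φ x / 2) * Φ01 x y - Real.cos (φ x / 2) * Φ10 x y
    let ΦB : ℝ × ℝ → ℝ × ℝ → ℝ := fun x y =>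
      Real.cos (φ x / 2) * Φ01 x y + Real.sin (φ x / 2) * Φ10 x y
    ∀ y : ℝ × ℝ,
      (fun x : ℝ × ℝ =>
          ΦA x y - G x y * (-y.1 - x.1 * y.1 / 4 - x.2 * y.2 / 4))
        =O[𝓝 (0 : ℝ × ℝ)] (fun x => r x ^ 2) ∧
      (fun x : ℝ × ℝ =>
          ΦB x y - G x y * (y.2 + x.2 * y.1 / 4 - x.1 * y.2 / 4))
        =O[𝓝 (0 : ℝ × ℝ)] (fun x => r x ^ 2) := by
  intro φ r Φ01 Φ10 ΦA ΦB y
  have hre (x : ℝ × ℝ) : r x * (Real.cos (φ x / 2) ^ 2 - Real.sin (φ x / 2) ^ 2) = x.1 := by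
    simpa [Complex.norm_add_mul_I] using
      Complex.norm_mul_cos_sq_sub_sin_sq_half_arg ((x.1 : ℂ) + x.2 * Complex.I)
  have him (x : ℝ × ℝ) : r x * (2 * Real.sin (φ x / 2) * Real.cos (φ x / 2)) = x.2 := by
    simpa [Complex.norm_add_mul_I] using
      Complex.norm_mul_two_mul_sin_mul_cos_half_arg ((x.1 : ℂ) + x.2 * Complex.I)
  have hr : Tendsto r (𝓝 0) (𝓝 0) := by
    simpa [r] using (show Continuous r by fun_prop).tendsto 0
  have hc : (fun x => (1 - r x) ^ ((1 : ℝ) / 4) - (1 - r x / 4)) =O[𝓝 0] fun x => r x ^ 2 := by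
    refine (isBigO_one_add_rpow_quarter_sub.comp_tendsto (by simpa using hr.neg)).congr
      (fun x => ?_) (fun x => neg_sq (r x))
    simp only [Function.comp_apply, ← sub_eq_add_neg]
    ring
  have hd := isBigO_one_add_rpow_quarter_sub.comp_tendsto hr
  have hGy := (hG y).isBigO_one ℝ
  have hsin (θ : ℝ) := abs_mul_rotate_le (Real.abs_sin_le_one θ) θ y.1 y.2
  have hcos (θ : ℝ) := abs_mul_rotate_le (Real.abs_cos_le_one θ) θ y.1 y.2
  have hcos' (θ : ℝ) := abs_mul_rotate_le (abs_neg (Real.cos θ) ▸ Real.abs_cos_le_one θ) θ y.1 y.2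
  constructor
  · refine (isBigO_mul_add_mul_of_abs_le hGy (fun x => (hsin (φ x / 2)).1)
      (fun x => (hcos' (φ x / 2)).2) hc hd).congr' (Eventually.of_forall fun x => ?_) .rfl
    exact (sin_mul_sub_cos_mul_sub_eq _ _ _ _ _ (Real.sin_sq_add_cos_sq _) (hre x) (him x)).symm
  · refine (isBigO_mul_add_mul_of_abs_le hGy (fun x => (hcos (φ x / 2)).1)
      (fun x => (hsin (φ x / 2)).2) hc hd).congr' (Eventually.of_forall fun x => ?_) .rfl
    exact (cos_mul_add_sin_mul_sub_eq _ _ _ _ _ (Real.sin_sq_add_cos_sq _) (hre x) (him x)).symm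
end

section
/- With Φ₀₁, Φ₁₀ as the first excited eigenfunctions of the reduced Hamiltonian ĥ(x) = −(1/2)Δ_y + (1/(2a²))⟨R(x)y, y⟩ (R the Rellich matrix), the off-diagonal matrix element ⟨Φ_B(x,·), ĥ(x) Φ_A(x,·)⟩_{L²(ℝ²)} equals a⁻¹ sin(φ/2)cos(φ/2)[ω₋(x) − ω₊(x)], which equals a⁻¹(−x₂/4 + O(|x|³)) and is nonzero for all x ≠ 0 with x₂ ≠ 0. -/
open Filter Topology Asymptotics RealInnerProductSpace

/-!
In the eigenbasis `Φ₀₁, Φ₁₀` the operator `ĥ` is diagonal, so its matrix element between the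
rotated vectors is `sin(φ/2)cos(φ/2)` times the difference of the two eigenvalues, i.e.
`a⁻¹ sin(φ/2)cos(φ/2)(ω₋ − ω₊)`. With `r = |x|` one has `sin(φ/2)cos(φ/2) = x₂/(2r)` and,
rationalising, `ω₋ − ω₊ = −r/S` where `S = √(1 − r) + √(1 + r) ∈ [2 − r², 2]`; hence the
coefficient is `x₂(S − 2)/(4S) − x₂/4`, and `|x₂(S − 2)/(4S)| ≤ r³/4`.
-/

theorem inner_rotation_apply_of_orthonormal_eigenvectors
    {L : Type*} [NormedAddCommGroup L] [InnerProductSpace ℝ L] {u v : L}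
    (hu : ⟪u, u⟫ = 1) (hv : ⟪v, v⟫ = 1) (huv : ⟪u, v⟫ = 0) {T : L →ₗ[ℝ] L} {α β : ℝ}
    (hTu : T u = α • u) (hTv : T v = β • v) (c s : ℝ) :
    ⟪c • u + s • v, T (s • u - c • v)⟫ = s * c * (α - β) := by
  rw [map_sub, map_smul, map_smul, hTu, hTv]
  simp only [inner_add_left, inner_sub_right, real_inner_smul_left, real_inner_smul_right,
    hu, hv, huv, real_inner_comm u v]
  ring

namespace Real

theorem sin_half_mul_cos_half (θ : ℝ) : sin (θ / 2) * cos (θ / 2) = sin θ / 2 := by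
  have := sin_two_mul (θ / 2)
  rw [show 2 * (θ / 2) = θ by ring] at this
  linarith

theorem sqrt_one_sub_lt_sqrt_one_add {r : ℝ} (hr : 0 < r) : √(1 - r) < √(1 + r) :=
  (sqrt_lt_sqrt_iff_of_pos (by linarith)).2 (by linarith)

theorem sqrt_one_sub_add_sqrt_one_add_mem_Icc {r : ℝ} (hr0 : 0 ≤ r) (hr1 : r ≤ 1) :
    √(1 - r) + √(1 + r) ∈ Set.Icc (2 - r ^ 2) 2 := by
  set p := √(1 - r)
  set q := √(1 + r)
  have hp : p ^ 2 = 1 - r := sq_sqrt (sub_nonneg.2 hr1)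
  have hq : q ^ 2 = 1 + r := sq_sqrt (by linarith)
  have hpq0 : 0 ≤ p * q := by positivity
  have hpq_sq : (p * q) ^ 2 = 1 - r ^ 2 := by rw [mul_pow, hp, hq]; ring
  have hpq1 : p * q ≤ 1 := by nlinarith
  -- `pq ∈ [0, 1]` gives `pq ≥ (pq)²`; then `(p + q)² = 2 + 2pq`
  have hpq : 1 - r ^ 2 ≤ p * q := by nlinarith
  constructor <;> nlinarith [sqrt_nonneg (1 - r), sqrt_nonneg (1 + r)]

theorem abs_div_mul_sqrt_one_sub_sub_sqrt_one_add_add_le {r y : ℝ} (hr1 : r ≤ 1)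
    (hy : |y| ≤ r) :
    |y / (2 * r) * (1 / 2 * √(1 - r) - 1 / 2 * √(1 + r)) + y / 4| ≤ r ^ 3 / 4 := by
  rcases (abs_nonneg y).trans hy |>.eq_or_lt with hr0 | hr0
  · obtain rfl : y = 0 := abs_nonpos_iff.1 (hr0 ▸ hy)
    simp [← hr0]
  set S := √(1 - r) + √(1 + r)
  obtain ⟨hS, hS2⟩ := sqrt_one_sub_add_sqrt_one_add_mem_Icc hr0.le hr1
  have hS1 : 1 ≤ S := by nlinarith
  have hdiff : 1 / 2 * √(1 - r) - 1 / 2 * √(1 + r) = -r / S := by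
    rw [eq_div_iff (by positivity)]
    linear_combination (1 / 2 : ℝ) *
      (sq_sqrt (by linarith : 0 ≤ 1 - r) - sq_sqrt (by linarith : 0 ≤ 1 + r))
  have hexpr : y / (2 * r) * (1 / 2 * √(1 - r) - 1 / 2 * √(1 + r)) + y / 4
      = y * (S - 2) / (4 * S) := by
    rw [hdiff]
    field_simp
    ring
  rw [hexpr, abs_div, abs_mul, abs_of_nonpos (by linarith : S - 2 ≤ 0),
    abs_of_pos (by linarith : 0 < 4 * S)]
  calc |y| * -(S - 2) / (4 * S) ≤ r * r ^ 2 / (4 * 1) := by gcongr <;> linarith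
    _ = r ^ 3 / 4 := by ring

end Real

theorem Complex.sin_half_arg_mul_cos_half_arg (z : ℂ) :
    Real.sin (arg z / 2) * Real.cos (arg z / 2) = z.im / (2 * ‖z‖) := by
  rw [Real.sin_half_mul_cos_half, sin_arg, div_div, mul_comm]

theorem isBigO_sin_cos_half_arg_mul_sqrt_sub_add :
    (fun x : ℝ × ℝ =>
        Real.sin (Complex.arg ((x.1 : ℂ) + x.2 * Complex.I) / 2) *
            Real.cos (Complex.arg ((x.1 : ℂ) + x.2 * Complex.I) / 2) *
            ((1 / 2) * Real.sqrt (1 - Real.sqrt (x.1 ^ 2 + x.2 ^ 2)) -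
              (1 / 2) * Real.sqrt (1 + Real.sqrt (x.1 ^ 2 + x.2 ^ 2)))
          + x.2 / 4)
      =O[𝓝 (0 : ℝ × ℝ)] (fun x => Real.sqrt (x.1 ^ 2 + x.2 ^ 2) ^ 3) := by
  refine IsBigO.of_bound (1 / 4) ?_
  have hr : Tendsto (fun x : ℝ × ℝ => √(x.1 ^ 2 + x.2 ^ 2)) (𝓝 0) (𝓝 0) := by
    simpa using (by fun_prop : Continuous fun x : ℝ × ℝ => √(x.1 ^ 2 + x.2 ^ 2)).tendsto 0
  filter_upwards [hr.eventually (eventually_le_nhds one_pos)] with x hx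
  rw [Complex.sin_half_arg_mul_cos_half_arg, Complex.add_im, Complex.ofReal_im,
    Complex.mul_I_im, Complex.ofReal_re, zero_add, Complex.norm_add_mul_I, Real.norm_eq_abs,
    Real.norm_eq_abs, abs_pow, abs_of_nonneg (Real.sqrt_nonneg _)]
  exact (Real.abs_div_mul_sqrt_one_sub_sub_sqrt_one_add_add_le hx
    (Real.abs_le_sqrt (le_add_of_nonneg_left (sq_nonneg x.1)))).trans_eq (by ring)

theorem offdiagonal_matrix_element_general
    {L : Type*} [NormedAddCommGroup L] [InnerProductSpace ℝ L]
    (a : ℝ) (ha : 0 < a)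
    (r φ : ℝ) (hr : 0 < r)
    (x₂ : ℝ) (hx₂ : x₂ = r * Real.sin φ)
    (ωp ωm E00 : ℝ)
    (hωp : ωp = (1 / 2) * Real.sqrt (1 + r)) (hωm : ωm = (1 / 2) * Real.sqrt (1 - r))
    (Φ01 Φ10 : L) (h : L →ₗ[ℝ] L)
    (hnorm01 : ⟪Φ01, Φ01⟫ = 1) (hnorm10 : ⟪Φ10, Φ10⟫ = 1) (horth : ⟪Φ01, Φ10⟫ = 0)
    (heig01 : h Φ01 = (E00 + ωm / a) • Φ01)
    (heig10 : h Φ10 = (E00 + ωp / a) • Φ10)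
    (ΦA ΦB : L)
    (hΦA : ΦA = Real.sin (φ / 2) • Φ01 - Real.cos (φ / 2) • Φ10)
    (hΦB : ΦB = Real.cos (φ / 2) • Φ01 + Real.sin (φ / 2) • Φ10) :
    ⟪ΦB, h ΦA⟫ = a⁻¹ * (Real.sin (φ / 2) * Real.cos (φ / 2) * (ωm - ωp)) ∧
    (x₂ ≠ 0 → ⟪ΦB, h ΦA⟫ ≠ 0) ∧
    -- the scalar function of `x` appearing above is `−x₂/4 + O(|x|³)` near the origin
    (fun x : ℝ × ℝ =>
        Real.sin (Complex.arg ((x.1 : ℂ) + x.2 * Complex.I) / 2) *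
            Real.cos (Complex.arg ((x.1 : ℂ) + x.2 * Complex.I) / 2) *
            ((1 / 2) * Real.sqrt (1 - Real.sqrt (x.1 ^ 2 + x.2 ^ 2)) -
              (1 / 2) * Real.sqrt (1 + Real.sqrt (x.1 ^ 2 + x.2 ^ 2)))
          + x.2 / 4)
      =O[𝓝 (0 : ℝ × ℝ)] (fun x => Real.sqrt (x.1 ^ 2 + x.2 ^ 2) ^ 3) := by
  have hval : ⟪ΦB, h ΦA⟫ = a⁻¹ * (Real.sin (φ / 2) * Real.cos (φ / 2) * (ωm - ωp)) := by
    rw [hΦA, hΦB, inner_rotation_apply_of_orthonormal_eigenvectors hnorm01 hnorm10 horth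
      heig01 heig10]
    ring
  refine ⟨hval, fun hx₂0 => ?_, isBigO_sin_cos_half_arg_mul_sqrt_sub_add⟩
  have hsin : Real.sin φ ≠ 0 := by rintro h0; exact hx₂0 (by rw [hx₂, h0, mul_zero])
  have hω : ωm - ωp ≠ 0 := by
    rw [hωm, hωp]; linarith [Real.sqrt_one_sub_lt_sqrt_one_add hr]
  rw [hval, Real.sin_half_mul_cos_half]
  exact mul_ne_zero (inv_ne_zero ha.ne') (mul_ne_zero (div_ne_zero hsin two_ne_zero) hω)

/-- With `Φ₀₁, Φ₁₀` orthonormal first excited eigenfunctions of the reduced Hamiltonian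
`ĥ(x)` with eigenvalues `E₀₀ + ω∓/a`, the off-diagonal matrix element of `ĥ(x)` between
the rotated basis vectors `Φ_A = sin(φ/2)Φ₀₁ − cos(φ/2)Φ₁₀`,
`Φ_B = cos(φ/2)Φ₀₁ + sin(φ/2)Φ₁₀` equals `a⁻¹ sin(φ/2)cos(φ/2)(ω₋ − ω₊)`, which is
nonzero whenever `x ≠ 0` and `x₂ ≠ 0`, and equals `a⁻¹(−x₂/4 + O(|x|³))` near `0`. -/
theorem offdiagonal_matrix_element
    {L : Type*} [NormedAddCommGroup L] [InnerProductSpace ℝ L]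
    (a : ℝ) (ha : 0 < a)
    (r φ : ℝ) (hr : 0 < r) (hr1 : r < 1)
    (x₁ x₂ : ℝ) (hx₁ : x₁ = r * Real.cos φ) (hx₂ : x₂ = r * Real.sin φ)
    (ωp ωm E00 : ℝ)
    (hωp : ωp = (1 / 2) * Real.sqrt (1 + r)) (hωm : ωm = (1 / 2) * Real.sqrt (1 - r))
    (Φ01 Φ10 : L) (h : L →ₗ[ℝ] L)
    (hnorm01 : ⟪Φ01, Φ01⟫ = 1) (hnorm10 : ⟪Φ10, Φ10⟫ = 1) (horth : ⟪Φ01, Φ10⟫ = 0)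
    (heig01 : h Φ01 = (E00 + ωm / a) • Φ01)
    (heig10 : h Φ10 = (E00 + ωp / a) • Φ10)
    (ΦA ΦB : L)
    (hΦA : ΦA = Real.sin (φ / 2) • Φ01 - Real.cos (φ / 2) • Φ10)
    (hΦB : ΦB = Real.cos (φ / 2) • Φ01 + Real.sin (φ / 2) • Φ10) :
    ⟪ΦB, h ΦA⟫ = a⁻¹ * (Real.sin (φ / 2) * Real.cos (φ / 2) * (ωm - ωp)) ∧
    (x₂ ≠ 0 → ⟪ΦB, h ΦA⟫ ≠ 0) ∧
    -- the scalar function of `x` appearing above is `−x₂/4 + O(|x|³)` near the origin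
    (fun x : ℝ × ℝ =>
        Real.sin (Complex.arg ((x.1 : ℂ) + x.2 * Complex.I) / 2) *
            Real.cos (Complex.arg ((x.1 : ℂ) + x.2 * Complex.I) / 2) *
            ((1 / 2) * Real.sqrt (1 - Real.sqrt (x.1 ^ 2 + x.2 ^ 2)) -
              (1 / 2) * Real.sqrt (1 + Real.sqrt (x.1 ^ 2 + x.2 ^ 2)))
          + x.2 / 4)
      =O[𝓝 (0 : ℝ × ℝ)] (fun x => Real.sqrt (x.1 ^ 2 + x.2 ^ 2) ^ 3) :=
  offdiagonal_matrix_element_general a ha r φ hr x₂ hx₂ ωp ωm E00 hωp hωm Φ01 Φ10 h hnorm01 hnorm10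
    horth heig01 heig10 ΦA ΦB hΦA hΦB
end
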